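/- arXiv:2306.06298 — 3 statements merged into one kernel-verified Lean document; each statement's English description precedes it below -/
import Mathlib

section
/- Let T be a tree, and let f be a leaf labeling of T with f(u) = f(v) = s₁ and f(x) = f(y) = s₂ where s₁ ≠ s₂, such that f admits a convex extension on T. Then T displays the quartet tree uv|xy, i.e., some edge of T separates {u, v} from {x, y}. -/
open SimpleGraph

/-- `v` is a leaf of the (unrooted) graph `G`: it has exactly one neighbor. -/
def IsLeafG {V : Type*} (G : SimpleGraph V) (v : V) : Prop := (G.neighborSet v).ncard = 1

/-- `G` displays the quartet tree `uv|xy`: some edge of `G` separates `{u,v}` from `{x,y}`. -/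
def Displays {V : Type*} (G : SimpleGraph V) (u v x y : V) : Prop :=
  ∃ e ∈ G.edgeSet, (G.deleteEdges {e}).Reachable u v ∧ (G.deleteEdges {e}).Reachable x y ∧
    ¬ (G.deleteEdges {e}).Reachable u x

/-- `g` is a convex extension of the leaf labeling `f` (restricted to the leaves, given by
the predicate `leafP`) on `G`: `g` agrees with `f` on leaves and each state class of `g`
induces a connected subgraph. -/
def ConvexExtP {V S : Type*} (G : SimpleGraph V) (leafP : V → Prop) (f g : V → S) : Prop :=
  (∀ v, leafP v → g v = f v) ∧
    ∀ s : S, (g ⁻¹' {s}).Nonempty → (G.induce (g ⁻¹' {s})).Connected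

/-- The leaf labeling `f` is convex (homoplasy-free) on `G`. -/
def ConvexOnP {V S : Type*} (G : SimpleGraph V) (leafP : V → Prop) (f : V → S) : Prop :=
  ∃ g, ConvexExtP G leafP f g

/-- Auxiliary: along a path from a vertex in state `s₁` to a vertex not in state `s₁`,
there is a crossing edge `s(a,b)` with `g a = s₁`, `g b ≠ s₁`, and a walk from `b` to the
endpoint avoiding this edge. -/
lemma qtc_crossing {V S : Type*} {T : SimpleGraph V} {g : V → S} {s₁ : S} :
    ∀ {u x : V} (w : T.Walk u x), w.IsPath → g u = s₁ → g x ≠ s₁ →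
      ∃ a b, T.Adj a b ∧ g a = s₁ ∧ g b ≠ s₁ ∧ ∃ w' : T.Walk b x, s(a, b) ∉ w'.edges := by
  intro u x w
  induction w with
  | nil => intro _ h1 h2; exact absurd h1 h2
  | @cons u d x h w ih =>
    intro hp h1 h2
    rw [SimpleGraph.Walk.cons_isPath_iff] at hp
    by_cases hd : g d = s₁
    · exact ih hp.1 hd h2
    · refine ⟨u, d, h, h1, hd, w, ?_⟩
      intro hmem
      exact hp.2 (SimpleGraph.Walk.fst_mem_support_of_mem_edges w hmem)

/-- Auxiliary: vertices in the state class of `s` are reachable from each other after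
deleting an edge whose second endpoint is outside the class. -/
lemma qtc_reach {V S : Type*} {T : SimpleGraph V} {g : V → S} {s : S} {a b : V}
    (hb : g b ≠ s) (hc : (T.induce (g ⁻¹' {s})).Connected)
    {p q : V} (hp : g p = s) (hq : g q = s) :
    (T.deleteEdges {s(a, b)}).Reachable p q := by
  have key : ∀ (c d : g ⁻¹' {s}), (T.induce (g ⁻¹' {s})).Adj c d →
      (T.deleteEdges {s(a, b)}).Adj c d := by
    intro c d hcd
    rw [SimpleGraph.deleteEdges_adj]
    refine ⟨hcd, ?_⟩
    intro he
    rw [Set.mem_singleton_iff] at he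
    have hbm : b ∈ s((c : V), (d : V)) := by rw [he]; exact Sym2.mem_mk_right a b
    rcases Sym2.mem_iff.mp hbm with h' | h'
    · exact hb (h' ▸ c.2)
    · exact hb (h' ▸ d.2)
  exact (hc.preconnected ⟨p, hp⟩ ⟨q, hq⟩).map ⟨Subtype.val, fun {c d} h => key c d h⟩

/-- correctness of QTC on a tree: If a leaf labeling `f` admits a convex
extension on a tree `T`, and `u,v,x,y` are leaves with `f u = f v = s₁`, `f x = f y = s₂` and
`s₁ ≠ s₂`, then `T` displays the quartet tree `uv|xy`. -/
theorem stmt4 {V S : Type*} (T : SimpleGraph V) (hT : T.IsTree)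
    (f : V → S) (hconv : ConvexOnP T (IsLeafG T) f)
    (u v x y : V) (s₁ s₂ : S)
    (hu : IsLeafG T u) (hv : IsLeafG T v) (hx : IsLeafG T x) (hy : IsLeafG T y)
    (huv : f u = s₁ ∧ f v = s₁) (hxy : f x = s₂ ∧ f y = s₂) (hne : s₁ ≠ s₂) :
    Displays T u v x y := by
  classical
  obtain ⟨g, hg1, hg2⟩ := hconv
  have hgu : g u = s₁ := (hg1 u hu).trans huv.1
  have hgv : g v = s₁ := (hg1 v hv).trans huv.2
  have hgx : g x = s₂ := (hg1 x hx).trans hxy.1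
  have hgy : g y = s₂ := (hg1 y hy).trans hxy.2
  have hA : (T.induce (g ⁻¹' {s₁})).Connected := hg2 s₁ ⟨u, hgu⟩
  have hB : (T.induce (g ⁻¹' {s₂})).Connected := hg2 s₂ ⟨x, hgx⟩
  -- a path from u to x
  obtain ⟨w⟩ := hT.isConnected.preconnected u x
  obtain ⟨a, b, hab, ha, hb, w', hw'⟩ :=
    qtc_crossing (w.toPath : T.Walk u x) w.toPath.2 hgu (by rw [hgx]; exact fun h => hne h.symm)
  refine ⟨s(a, b), hab, ?_, ?_, ?_⟩
  · exact qtc_reach hb hA hgu hgv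
  · have ha' : g a ≠ s₂ := by rw [ha]; exact hne
    have : (T.deleteEdges {s(b, a)}).Reachable x y := qtc_reach ha' hB hgx hgy
    rwa [Sym2.eq_swap] at this
  · intro hux
    -- bridge: a and b are not reachable after deleting the edge
    have hbr : T.IsBridge s(a, b) :=
      (isAcyclic_iff_forall_adj_isBridge.mp hT.IsAcyclic) hab
    have hnr : ¬ (T.deleteEdges {s(a, b)}).Reachable a b := hbr
    apply hnr
    have hau : (T.deleteEdges {s(a, b)}).Reachable a u := qtc_reach hb hA ha hgu
    have hxb : (T.deleteEdges {s(a, b)}).Reachable b x :=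
      ⟨w'.toDeleteEdges {s(a, b)} (by intro e he hee; rw [Set.mem_singleton_iff] at hee; exact hw' (hee ▸ he))⟩
    exact (hau.trans hux).trans hxb.symm
end

section
/- Let G be a connected graph whose cycles are pairwise vertex-disjoint, let C be a cycle of G with k vertices, and remove all edges of C from G. Then the resulting graph has exactly k connected components, each containing exactly one vertex of C. -/
/-!
An edge `s(u, x)` not on the cycle `c` but leaving a vertex `u` of `c` is a bridge: a cycle
through it would meet `c` at `u`, hence have the same edges as `c`. So a path from `u` to
another vertex `u'` of `c` avoiding the edges of `c` is impossible: its first edge `s(u, x)`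
could be bypassed by the rest of the path followed by an arc of `c` from `u'` back to `u`.
Conversely, every vertex reaches `c` without using edges of `c`, by following a walk to `c`
up to its first vertex on `c`.
-/

open SimpleGraph

/-- The cycles of `G` are pairwise vertex-disjoint: any two cycles that share a vertex are the
same cycle (i.e., have the same edge set). -/
def CyclesVertexDisjoint {V : Type*} (G : SimpleGraph V) : Prop :=
  ∀ {u v : V} (c₁ : G.Walk u u) (c₂ : G.Walk v v), c₁.IsCycle → c₂.IsCycle →
    (∃ w, w ∈ c₁.support ∧ w ∈ c₂.support) → ∀ e, e ∈ c₁.edges ↔ e ∈ c₂.edges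

namespace SimpleGraph.Walk

variable {V : Type*} {G : SimpleGraph V}

theorem IsCycle.ncard_support {r : V} {c : G.Walk r r} (hc : c.IsCycle) :
    {u | u ∈ c.support}.ncard = c.support.tail.length := by
  classical
  have hr : r ∈ c.support.tail := c.end_mem_tail_support hc.not_nil
  have hsupp : {u | u ∈ c.support} = ↑c.support.tail.toFinset := by
    ext u
    simp only [Set.mem_ofPred_eq, c.mem_support_iff, List.coe_toFinset]
    exact ⟨by rintro (rfl | h) <;> assumption, Or.inr⟩
  rw [hsupp, Set.ncard_coe_finset, List.toFinset_card_of_nodup hc.support_nodup]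

theorem reachable_deleteEdges_of_mem_support {a b u v : V} (c : G.Walk a b)
    {s : Set (Sym2 V)} (hs : ∀ e ∈ c.edges, e ∉ s) (hu : u ∈ c.support) (hv : v ∈ c.support) :
    (G.deleteEdges s).Reachable u v := by
  classical
  set c' := c.toDeleteEdges s hs
  have hsupp : c'.support = c.support := support_transfer _ _
  rw [← hsupp] at hu hv
  exact (c'.takeUntil u hu).reachable.symm.trans (c'.takeUntil v hv).reachable

theorem exists_mem_support_reachable_deleteEdges {a b w y : V} (c : G.Walk a b)
    (p : G.Walk w y) (hy : y ∈ c.support) :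
    ∃ u ∈ c.support, (G.deleteEdges {e | e ∈ c.edges}).Reachable w u := by
  induction p with
  | nil => exact ⟨_, hy, .rfl⟩
  | @cons w x _ hwx _ ih =>
    by_cases hw : w ∈ c.support
    · exact ⟨w, hw, .rfl⟩
    · obtain ⟨u, hu, hxu⟩ := ih hy
      have hwx' : s(w, x) ∉ c.edges := fun h ↦ hw (c.fst_mem_support_of_mem_edges h)
      exact ⟨u, hu, (deleteEdges_adj.mpr ⟨hwx, hwx'⟩).reachable.trans hxu⟩

end SimpleGraph.Walk

namespace CyclesVertexDisjoint

variable {V : Type*} {G : SimpleGraph V} {r : V} {c : G.Walk r r}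

theorem isBridge_of_notMem_edges (hdisj : CyclesVertexDisjoint G) (hc : c.IsCycle) {u x : V}
    (hu : u ∈ c.support) (hux : G.Adj u x) (hnot : s(u, x) ∉ c.edges) :
    G.IsBridge s(u, x) :=
  (isBridge_iff_forall_cycle_notMem hux).mpr fun _ p hp hmem ↦
    hnot ((hdisj c p hc hp ⟨u, hu, p.fst_mem_support_of_mem_edges hmem⟩ _).mpr hmem)

theorem eq_of_reachable_deleteEdges (hdisj : CyclesVertexDisjoint G) (hc : c.IsCycle)
    {u u' : V} (hu : u ∈ c.support) (hu' : u' ∈ c.support)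
    (h : (G.deleteEdges {e | e ∈ c.edges}).Reachable u u') : u = u' := by
  obtain ⟨p, hp⟩ := h.exists_isPath
  cases p with
  | nil => rfl
  | @cons _ x _ hadj t =>
    exfalso
    obtain ⟨hux, hnot⟩ := deleteEdges_adj.mp hadj
    refine isBridge_iff.mp (hdisj.isBridge_of_notMem_edges hc hu hux hnot) ?_
    have hcycle : (G.deleteEdges {s(u, x)}).Reachable u u' :=
      c.reachable_deleteEdges_of_mem_support
        (fun e he he' ↦ hnot (Set.mem_singleton_iff.mp he' ▸ he)) hu hu'
    -- the path `t` does not return to `u`, so it avoids `s(u, x)`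
    have htail : (G.deleteEdges {s(u, x)}).Reachable x u' := by
      refine reachable_deleteEdges_iff_exists_walk.mpr ⟨t.mapLe (deleteEdges_le _), ?_⟩
      rw [Walk.edges_mapLe_eq_edges]
      exact fun hmem ↦ ((Walk.cons_isPath_iff _ _).mp hp).2 (t.fst_mem_support_of_mem_edges hmem)
    exact hcycle.trans htail.symm

end CyclesVertexDisjoint

/-- Let `G` be connected with pairwise vertex-disjoint cycles and let `c` be a
cycle with `k` vertices.  After removing the edges of `c`, every vertex of `G` can reach
exactly one vertex of the cycle: the components are in bijection with the `k` cycle vertices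
(so there are exactly `k` components, each containing exactly one vertex of the cycle). -/
theorem stmt6 {V : Type*} (G : SimpleGraph V) (hconn : G.Connected)
    (hdisj : CyclesVertexDisjoint G)
    {r : V} (c : G.Walk r r) (hc : c.IsCycle) (k : ℕ) (hk : c.support.tail.length = k) :
    {u | u ∈ c.support}.ncard = k ∧
    ∀ w : V, ∃! u : V, u ∈ c.support ∧
      (G.deleteEdges {e | e ∈ c.edges}).Reachable w u := by
  refine ⟨hk ▸ hc.ncard_support, fun w ↦ ?_⟩
  obtain ⟨u, hu, hwu⟩ :=
    c.exists_mem_support_reachable_deleteEdges (hconn w r).some c.start_mem_support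
  exact ⟨u, ⟨hu, hwu⟩, fun u' ⟨hu', hwu'⟩ ↦
    hdisj.eq_of_reachable_deleteEdges hc hu' hu (hwu'.symm.trans hwu)⟩
end

section
/- Let N be a level-1 network, C a cycle of N with vertex set partitioned into attached components, and f a {0,1}-leaf labeling that is convex on some tree contained in N. Classify each cycle vertex by its attached component: type A(0) if all its leaves are labeled 0, type A(1) if all are labeled 1, and type A(0,1) if both labels occur. Then at most one vertex of C has type A(0,1). -/
open SimpleGraph

namespace Stmt18Aux

variable {V : Type*} [DecidableEq V]

lemma fin2_cases : ∀ i j : Fin 2, i ≠ j → (i = 0 ∧ j = 1) ∨ (i = 1 ∧ j = 0) := by decide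

/-- Fundamental cycle of a non-tree edge. -/
lemma fund {G T : SimpleGraph V} (hTG : T ≤ G) (hT : T.IsTree)
    {a b : V} (hab : G.Adj a b) (hnT : s(a, b) ∉ T.edgeSet) :
    ∃ p : T.Walk b a, p.IsPath ∧
      ∃ c₂ : G.Walk a a, c₂.IsCycle ∧ c₂.edges = s(a, b) :: p.edges ∧
        c₂.support = a :: p.support := by
  obtain ⟨q⟩ := hT.isConnected.preconnected b a
  refine ⟨q.toPath.val, q.toPath.property, ?_⟩
  have hPe : ∀ e ∈ (q.toPath.val).edges, e ∈ G.edgeSet := fun e he =>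
    edgeSet_mono hTG ((q.toPath.val).edges_subset_edgeSet he)
  refine ⟨Walk.cons hab ((q.toPath.val).transfer G hPe), ?_, ?_, ?_⟩
  · rw [Walk.cons_isCycle_iff]
    refine ⟨q.toPath.property.transfer hPe, ?_⟩
    rw [Walk.edges_transfer]
    exact fun h => hnT ((q.toPath.val).edges_subset_edgeSet h)
  · rw [Walk.edges_cons, Walk.edges_transfer]
  · rw [Walk.support_cons, Walk.support_transfer]

lemma reach_edge {G T : SimpleGraph V} (hTG : T ≤ G) (hT : T.IsTree)
    (hdisj : CyclesVertexDisjoint G) {r : V} {cyc : G.Walk r r} (hcyc : cyc.IsCycle)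
    {a c : V} (h : (G.deleteEdges {e | e ∈ cyc.edges}).Adj a c) :
    (T.deleteEdges {e | e ∈ cyc.edges}).Reachable a c := by
  rw [SimpleGraph.deleteEdges_adj] at h
  obtain ⟨hG, hnc⟩ := h
  have hnc' : s(a, c) ∉ cyc.edges := hnc
  by_cases hTe : s(a, c) ∈ T.edgeSet
  · exact Adj.reachable (by
      rw [SimpleGraph.deleteEdges_adj]
      exact ⟨T.mem_edgeSet.mp hTe, hnc⟩)
  · obtain ⟨p, hp, c₂, hc₂, hce, hcs⟩ := fund hTG hT hG hTe
    have hdis : ∀ z, z ∈ cyc.support → z ∈ c₂.support → False := by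
      intro z h1 h2
      have := hdisj cyc c₂ hcyc hc₂ ⟨z, h1, h2⟩ s(a, c)
      exact hnc' (this.mpr (by rw [hce]; exact List.mem_cons_self))
    have hpe : ∀ (x y : V), s(x, y) ∈ p.edges → s(x, y) ∉ cyc.edges := by
      intro x y he hecyc
      exact hdis x (cyc.fst_mem_support_of_mem_edges hecyc)
        (by rw [hcs]; exact List.mem_cons_of_mem _ (p.fst_mem_support_of_mem_edges he))
    have hpe' : ∀ e ∈ p.edges, e ∈ (T.deleteEdges {e | e ∈ cyc.edges}).edgeSet := by
      intro e he
      rw [edgeSet_deleteEdges]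
      refine ⟨p.edges_subset_edgeSet he, ?_⟩
      revert he
      induction e using Sym2.ind with
      | _ x y => exact fun he hc => hpe x y he hc
    exact ⟨(p.transfer _ hpe').reverse⟩

lemma reach_transfer {G T : SimpleGraph V} (hTG : T ≤ G) (hT : T.IsTree)
    (hdisj : CyclesVertexDisjoint G) {r : V} {cyc : G.Walk r r} (hcyc : cyc.IsCycle)
    {x v : V} (h : (G.deleteEdges {e | e ∈ cyc.edges}).Reachable x v) :
    (T.deleteEdges {e | e ∈ cyc.edges}).Reachable x v := by
  obtain ⟨W⟩ := h
  induction W with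
  | nil => exact Reachable.refl _
  | cons hadj W' ih => exact (reach_edge hTG hT hdisj hcyc hadj).trans ih

lemma missing_unique {G T : SimpleGraph V} (hTG : T ≤ G) (hT : T.IsTree)
    (hdisj : CyclesVertexDisjoint G) {r : V} {cyc : G.Walk r r} (hcyc : cyc.IsCycle) :
    ∃ e₀, ∀ e ∈ cyc.edges, e ≠ e₀ → e ∈ T.edgeSet := by
  by_cases hall : ∀ e ∈ cyc.edges, e ∈ T.edgeSet
  · exact absurd (hcyc.transfer hall) (hT.IsAcyclic _)
  · push_neg at hall
    obtain ⟨e₀, he₀c, he₀T⟩ := hall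
    refine ⟨e₀, fun e hec hne => ?_⟩
    by_contra heT
    revert he₀c he₀T
    induction e₀ using Sym2.ind with
    | _ a b =>
      intro he₀c he₀T
      obtain ⟨p, hp, c₂, hc₂, hce, hcs⟩ := fund hTG hT (cyc.adj_of_mem_edges he₀c) he₀T
      have hshare : ∃ z, z ∈ cyc.support ∧ z ∈ c₂.support :=
        ⟨a, cyc.fst_mem_support_of_mem_edges he₀c, by rw [hcs]; exact List.mem_cons_self⟩
      have hmem := (hdisj cyc c₂ hcyc hc₂ hshare e).mp hec
      rw [hce] at hmem
      rcases List.mem_cons.mp hmem with h | h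
      · exact hne h
      · exact heT (p.edges_subset_edgeSet h)

lemma mem_tail_of_closed {G : SimpleGraph V} {r : V} {p : G.Walk r r} (hp : ¬p.Nil) {w : V}
    (hw : w ∈ p.support) : w ∈ p.support.tail := by
  cases p with
  | nil => exact absurd Walk.nil_nil hp
  | cons h q =>
    rw [Walk.support_cons, List.tail_cons]
    rw [Walk.support_cons] at hw
    rcases List.mem_cons.mp hw with rfl | hw
    · exact q.end_mem_support
    · exact hw

lemma sep {G T : SimpleGraph V} (hTG : T ≤ G) (hT : T.IsTree)
    (hdisj : CyclesVertexDisjoint G) {r : V} {cyc : G.Walk r r} (hcyc : cyc.IsCycle)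
    {v w : V} (hv : v ∈ cyc.support) (hw : w ∈ cyc.support)
    (hreach : (T.deleteEdges {e | e ∈ cyc.edges}).Reachable v w) : v = w := by
  by_contra hne
  obtain ⟨e₀, he₀⟩ := missing_unique hTG hT hdisj hcyc
  have hcyc' : (cyc.rotate v hv).IsCycle := hcyc.rotate hv
  have hedges' : ∀ e, e ∈ (cyc.rotate v hv).edges ↔ e ∈ cyc.edges := fun e =>
    (cyc.rotate_edges v hv).perm.mem_iff
  have hw' : w ∈ (cyc.rotate v hv).support := by
    have h1 : w ∈ cyc.support.tail := mem_tail_of_closed hcyc.not_nil hw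
    exact List.mem_of_mem_tail (((cyc.support_rotate v hv).perm.mem_iff).mpr h1)
  have hsplit := (cyc.rotate v hv).take_spec hw'
  have hnodup : (cyc.rotate v hv).edges.Nodup := hcyc'.isCircuit.isTrail.edges_nodup
  have hdisj2 : ∀ e, e ∈ ((cyc.rotate v hv).takeUntil w hw').edges →
      e ∈ ((cyc.rotate v hv).dropUntil w hw').edges → False := by
    have h := hnodup
    rw [← hsplit, Walk.edges_append] at h
    exact fun e h1 h2 => (List.disjoint_of_nodup_append h) h1 h2
  have key : ∀ (arc : G.Walk v w), (∀ e ∈ arc.edges, e ∈ cyc.edges ∧ e ≠ e₀) → False := by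
    intro arc harc
    have hT1 : ∀ e ∈ arc.edges, e ∈ T.edgeSet := fun e he =>
      he₀ e (harc e he).1 (harc e he).2
    obtain ⟨q0⟩ := hreach
    have hq0 : ∀ e ∈ q0.edges, e ∈ T.edgeSet := by
      intro e he
      have h := q0.edges_subset_edgeSet he
      rw [edgeSet_deleteEdges] at h
      exact h.1
    have hq0n : ∀ e ∈ q0.edges, e ∉ cyc.edges := by
      intro e he
      have h := q0.edges_subset_edgeSet he
      rw [edgeSet_deleteEdges] at h
      exact h.2
    have hPeq : (arc.transfer T hT1).toPath = (q0.transfer T hq0).toPath :=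
      isAcyclic_iff_path_unique.mp hT.IsAcyclic _ _
    have hP1c : ∀ e ∈ ((arc.transfer T hT1).toPath.val).edges, e ∈ cyc.edges := by
      intro e he
      have h := Walk.edges_toPath_subset _ he
      rw [Walk.edges_transfer] at h
      exact (harc e h).1
    have hP1n : ∀ e ∈ ((arc.transfer T hT1).toPath.val).edges, e ∉ cyc.edges := by
      rw [hPeq]
      intro e he
      have h := Walk.edges_toPath_subset _ he
      rw [Walk.edges_transfer] at h
      exact hq0n e h
    have hnil : ((arc.transfer T hT1).toPath.val).edges = [] :=
      List.eq_nil_iff_forall_not_mem.mpr fun e he => hP1n e he (hP1c e he)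
    have hlen : ((arc.transfer T hT1).toPath.val).length = 0 := by
      rw [← Walk.length_edges, hnil]
      rfl
    exact hne (Walk.eq_of_length_eq_zero hlen)
  by_cases hcase : e₀ ∈ ((cyc.rotate v hv).takeUntil w hw').edges
  · apply key ((cyc.rotate v hv).dropUntil w hw').reverse
    intro e he
    rw [Walk.edges_reverse, List.mem_reverse] at he
    have h1 : e ∈ (cyc.rotate v hv).edges := by
      rw [← hsplit, Walk.edges_append]
      exact List.mem_append_right _ he
    exact ⟨(hedges' e).mp h1, fun h => hdisj2 e₀ hcase (h ▸ he)⟩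
  · apply key ((cyc.rotate v hv).takeUntil w hw')
    intro e he
    exact ⟨(hedges' e).mp ((cyc.rotate v hv).edges_takeUntil_subset hw' he),
      fun h => hcase (h ▸ he)⟩

lemma class_walk {T : SimpleGraph V} {g : V → Fin 2} {s : Fin 2}
    (hc : (T.induce (g ⁻¹' {s})).Connected) {a c : V} (ha : g a = s) (hcc : g c = s) :
    ∃ p : T.Walk a c, p.IsPath ∧ ∀ z ∈ p.support, g z = s := by
  obtain ⟨q⟩ := hc.preconnected ⟨a, ha⟩ ⟨c, hcc⟩
  let q' : T.Walk a c := q.map (SimpleGraph.Embedding.induce (g ⁻¹' {s})).toHom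
  have hsup : ∀ z ∈ q'.support, g z = s := by
    intro z hz
    rw [show q'.support = _ from Walk.support_map _ _, List.mem_map] at hz
    obtain ⟨⟨z', hz'⟩, _, rfl⟩ := hz
    exact hz'
  exact ⟨q'.toPath.val, q'.toPath.property,
    fun z hz => hsup z (Walk.support_toPath_subset _ hz)⟩

lemma crossUnique {T : SimpleGraph V} (hT : T.IsTree) (g : V → Fin 2)
    (hgc : ∀ s : Fin 2, (g ⁻¹' {s}).Nonempty → (T.induce (g ⁻¹' {s})).Connected)
    {a b c d : V} (hab : T.Adj a b) (hcd : T.Adj c d)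
    (ha : g a = 0) (hb : g b = 1) (hc : g c = 0) (hd : g d = 1) :
    a = c ∧ b = d := by
  obtain ⟨p0, hp0, hp0s⟩ := class_walk (hgc 0 ⟨a, ha⟩) ha hc
  obtain ⟨p1, hp1, hp1s⟩ := class_walk (hgc 1 ⟨b, hb⟩) hb hd
  have hR1 : (Walk.cons hcd.symm p0.reverse).IsPath := by
    rw [Walk.cons_isPath_iff]
    refine ⟨hp0.reverse, fun hds => ?_⟩
    rw [Walk.support_reverse, List.mem_reverse] at hds
    have h := hp0s d hds
    rw [hd] at h
    exact absurd h (by decide)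
  have hR2 : ((Walk.cons hab p1).reverse).IsPath := by
    apply Walk.IsPath.reverse
    rw [Walk.cons_isPath_iff]
    refine ⟨hp1, fun has => ?_⟩
    have h := hp1s a has
    rw [ha] at h
    exact absurd h (by decide)
  have hPeq : (⟨_, hR1⟩ : T.Path d a) = ⟨_, hR2⟩ :=
    isAcyclic_iff_path_unique.mp hT.IsAcyclic _ _
  have hedges := congrArg (fun q : T.Path d a => q.val.edges) hPeq
  simp only at hedges
  have hmem : s(a, b) ∈ (Walk.cons hcd.symm p0.reverse).edges := by
    rw [hedges, Walk.edges_reverse, List.mem_reverse, Walk.edges_cons]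
    exact List.mem_cons_self
  rw [Walk.edges_cons] at hmem
  rcases List.mem_cons.mp hmem with h | h
  · rcases Sym2.eq_iff.mp h with ⟨h1, _⟩ | ⟨h1, h2⟩
    · rw [h1, hd] at ha
      exact absurd ha (by decide)
    · exact ⟨h1, h2⟩
  · rw [Walk.edges_reverse, List.mem_reverse] at h
    have hbs := hp0s b (p0.snd_mem_support_of_mem_edges h)
    rw [hb] at hbs
    exact absurd hbs (by decide)

lemma cross {H : SimpleGraph V} (g : V → Fin 2) :
    ∀ {a b : V} (p : H.Walk a b), g a ≠ g b → ∃ x y, s(x, y) ∈ p.edges ∧ g x ≠ g y := by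
  intro a b p
  induction p with
  | nil => exact fun hne => absurd rfl hne
  | cons h q ih =>
    intro hne
    rename_i u x w
    by_cases hh : g u = g x
    · obtain ⟨s, t, hst, hgst⟩ := ih (by rwa [hh] at hne)
      exact ⟨s, t, by rw [Walk.edges_cons]; exact List.mem_cons_of_mem _ hst, hgst⟩
    · exact ⟨u, x, by rw [Walk.edges_cons]; exact List.mem_cons_self, hh⟩

lemma normCross {H : SimpleGraph V} (g : V → Fin 2) {s t : V} (W : H.Walk s t) {x y : V}
    (he : s(x, y) ∈ W.edges) (hg : g x ≠ g y) :
    ∃ a b, s(a, b) ∈ W.edges ∧ g a = 0 ∧ g b = 1 := by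
  rcases fin2_cases _ _ hg with ⟨h0, h1⟩ | ⟨h0, h1⟩
  · exact ⟨x, y, he, h0, h1⟩
  · exact ⟨y, x, by rwa [Sym2.eq_swap], h1, h0⟩

lemma reach_of_mem_support {H : SimpleGraph V} {s t : V} (p : H.Walk s t) {u : V}
    (h : u ∈ p.support) : H.Reachable s u := ⟨p.takeUntil u h⟩

end Stmt18Aux

open Stmt18Aux in
/-- Let `G` be an (unrooted) level-1 network (connected, cycles pairwise
vertex-disjoint), `cyc` a cycle of `G`, and `f` a `{0,1}`-leaf labeling that is convex on some
tree contained in `G` (a spanning tree, obtained by deleting one edge from each cycle).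
Classify each cycle vertex by the leaf labels occurring in its attached component (after
deleting the cycle's edges); then at most one vertex of the cycle has both labels `0` and `1`
in its component. -/
theorem stmt18 {V : Type*} (G : SimpleGraph V) (hconn : G.Connected)
    (hdisj : CyclesVertexDisjoint G)
    {r : V} (cyc : G.Walk r r) (hcyc : cyc.IsCycle)
    (f : V → Fin 2)
    (hconv : ∃ T : SimpleGraph V, T ≤ G ∧ T.IsTree ∧ ConvexOnP T (IsLeafG G) f) :
    ∀ v ∈ cyc.support, ∀ w ∈ cyc.support,
      ((∃ x, IsLeafG G x ∧ (G.deleteEdges {e | e ∈ cyc.edges}).Reachable x v ∧ f x = 0) ∧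
       (∃ x, IsLeafG G x ∧ (G.deleteEdges {e | e ∈ cyc.edges}).Reachable x v ∧ f x = 1)) →
      ((∃ x, IsLeafG G x ∧ (G.deleteEdges {e | e ∈ cyc.edges}).Reachable x w ∧ f x = 0) ∧
       (∃ x, IsLeafG G x ∧ (G.deleteEdges {e | e ∈ cyc.edges}).Reachable x w ∧ f x = 1)) →
      v = w := by
  classical
  obtain ⟨T, hTG, hT, g, hgf, hgc⟩ := hconv
  rintro v hv w hw ⟨⟨x0, hx0l, hx0r, hx00⟩, x1, hx1l, hx1r, hx11⟩
    ⟨⟨y0, hy0l, hy0r, hy00⟩, y1, hy1l, hy1r, hy11⟩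
  have gx0 : g x0 = 0 := by rw [hgf x0 hx0l, hx00]
  have gx1 : g x1 = 1 := by rw [hgf x1 hx1l, hx11]
  have gy0 : g y0 = 0 := by rw [hgf y0 hy0l, hy00]
  have gy1 : g y1 = 1 := by rw [hgf y1 hy1l, hy11]
  obtain ⟨pa⟩ := reach_transfer hTG hT hdisj hcyc hx0r
  obtain ⟨pb⟩ := reach_transfer hTG hT hdisj hcyc hx1r
  obtain ⟨qa⟩ := reach_transfer hTG hT hdisj hcyc hy0r
  obtain ⟨qb⟩ := reach_transfer hTG hT hdisj hcyc hy1r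
  have hvW : v ∈ (pa.append pb.reverse).support := by
    rw [Walk.mem_support_append_iff]
    exact Or.inl pa.end_mem_support
  have hwW : w ∈ (qa.append qb.reverse).support := by
    rw [Walk.mem_support_append_iff]
    exact Or.inl qa.end_mem_support
  obtain ⟨xv, yv, hev, hgv⟩ := cross g (pa.append pb.reverse) (by rw [gx0, gx1]; decide)
  obtain ⟨xw, yw, hew, hgw⟩ := cross g (qa.append qb.reverse) (by rw [gy0, gy1]; decide)
  obtain ⟨av, bv, hevW, hav, hbv⟩ := normCross g _ hev hgv
  obtain ⟨aw, bw, hewW, haw, hbw⟩ := normCross g _ hew hgw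
  have hreach_v_av : (T.deleteEdges {e | e ∈ cyc.edges}).Reachable v av :=
    (pa.reachable.symm).trans
      (reach_of_mem_support _ ((pa.append pb.reverse).fst_mem_support_of_mem_edges hevW))
  have hreach_w_aw : (T.deleteEdges {e | e ∈ cyc.edges}).Reachable w aw :=
    (qa.reachable.symm).trans
      (reach_of_mem_support _ ((qa.append qb.reverse).fst_mem_support_of_mem_edges hewW))
  have hTadj_v : T.Adj av bv := by
    have h := (pa.append pb.reverse).edges_subset_edgeSet hevW
    rw [edgeSet_deleteEdges] at h
    exact T.mem_edgeSet.mp h.1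
  have hTadj_w : T.Adj aw bw := by
    have h := (qa.append qb.reverse).edges_subset_edgeSet hewW
    rw [edgeSet_deleteEdges] at h
    exact T.mem_edgeSet.mp h.1
  obtain ⟨hac, _⟩ := crossUnique hT g hgc hTadj_v hTadj_w hav hbv haw hbw
  exact sep hTG hT hdisj hcyc hv hw ((hac ▸ hreach_v_av).trans hreach_w_aw.symm)
end
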